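/- (Non-convexity of inner loss minimization with normal-inverse-Gamma second-order distributions.) Fix y ∈ ℝ. Define f : ℝ × ℝ_{>0} × (1, ∞) × ℝ_{>0} → ℝ by f(γ, ν, α, β) = −log St(y; γ, β(1+ν)/(να), 2α), where St(y; μ_s, σ²_s, ν_s) = Γ((ν_s+1)/2)/(Γ(ν_s/2)√(ν_s π σ²_s)) · (1 + (y−μ_s)²/(ν_s σ²_s))^{−(ν_s+1)/2} is the Student's-t density. Then f is not convex on its (convex) domain: there exist points u, v in the domain and ρ ∈ (0,1) with f(ρu + (1−ρ)v) > ρ f(u) + (1−ρ) f(v). -/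
import Mathlib


open Real

/-- The Student's-t density with location `μs`, scale `σ²s = s` and `νs` degrees of
freedom, evaluated at `y`:
`St(y; μs, s, νs) = Γ((νs+1)/2)/(Γ(νs/2) √(νs π s)) (1 + (y-μs)²/(νs s))^{-(νs+1)/2}`. -/
noncomputable def studentTDensity (y μs s νs : ℝ) : ℝ :=
  Real.Gamma ((νs + 1) / 2) / (Real.Gamma (νs / 2) * Real.sqrt (νs * Real.pi * s)) *
    (1 + (y - μs) ^ 2 / (νs * s)) ^ (-(νs + 1) / 2)

/-- The per-instance negative log-likelihood of the inner-expectation objective for deep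
evidential regression, as a function of the normal-inverse-Gamma parameters
`(γ, ν, α, β)`: `f(γ, ν, α, β) = -log St(y; γ, β(1+ν)/(να), 2α)`. -/
noncomputable def nigInnerLoss (y : ℝ) (p : ℝ × ℝ × ℝ × ℝ) : ℝ :=
  -Real.log (studentTDensity y p.1 (p.2.2.2 * (1 + p.2.1) / (p.2.1 * p.2.2.1)) (2 * p.2.2.1))

/-- The domain `ℝ × ℝ_{>0} × (1, ∞) × ℝ_{>0}` of normal-inverse-Gamma parameters. -/
def nigDomain : Set (ℝ × ℝ × ℝ × ℝ) :=
  {p | 0 < p.2.1 ∧ 1 < p.2.2.1 ∧ 0 < p.2.2.2}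

/-- On the slice `ν = 1, α = 2, β = 1/4`, the loss reduces to
`C + (5/2) log (1 + (y - γ)²)`, which is concave in `γ` far from `y`. -/
lemma nig_key (y γ : ℝ) : nigInnerLoss y (γ, 1, 2, 1/4) =
    -Real.log (Real.Gamma (5/2) / (Real.Gamma 2 * Real.sqrt Real.pi))
      + (5/2) * Real.log (1 + (y - γ)^2) := by
  have hX : (0:ℝ) < 1 + (y - γ)^2 := by positivity
  have hK : (0:ℝ) < Real.Gamma (5/2) / (Real.Gamma 2 * Real.sqrt Real.pi) := by
    have h1 : 0 < Real.Gamma (5/2) := Real.Gamma_pos_of_pos (by norm_num)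
    have h2 : 0 < Real.Gamma 2 := Real.Gamma_pos_of_pos (by norm_num)
    have h3 : 0 < Real.sqrt Real.pi := Real.sqrt_pos.2 Real.pi_pos
    positivity
  show -Real.log (studentTDensity y γ ((1/4) * (1 + 1) / (1 * 2)) (2 * 2)) = _
  unfold studentTDensity
  have e1 : ((1:ℝ)/4) * (1 + 1) / (1 * 2) = 1/4 := by norm_num
  rw [e1]
  have e2 : (2:ℝ) * 2 * Real.pi * (1/4) = Real.pi := by ring
  have e3 : ((2:ℝ) * 2 + 1) / 2 = 5/2 := by norm_num
  have e4 : ((2:ℝ) * 2) / 2 = 2 := by norm_num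
  have e5 : (2:ℝ) * 2 * (1/4) = 1 := by norm_num
  rw [e2, e3, e4, e5, div_one,
    Real.log_mul (ne_of_gt hK) (ne_of_gt (Real.rpow_pos_of_pos hX _)),
    Real.log_rpow hX]
  ring

/-- **Non-convexity of inner loss minimization with normal-inverse-Gamma second-order
distributions.** For every `y ∈ ℝ`, the function
`f(γ, ν, α, β) = -log St(y; γ, β(1+ν)/(να), 2α)` is not convex on its convex domain
`ℝ × ℝ_{>0} × (1, ∞) × ℝ_{>0}`: there exist points `u, v` in the domain and `ρ ∈ (0,1)`
with `f(ρu + (1-ρ)v) > ρ f(u) + (1-ρ) f(v)`. -/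
theorem nigInnerLoss_not_convex (y : ℝ) :
    ¬ ConvexOn ℝ nigDomain (nigInnerLoss y) ∧
    ∃ u ∈ nigDomain, ∃ v ∈ nigDomain, ∃ ρ ∈ Set.Ioo (0 : ℝ) 1,
      nigInnerLoss y (ρ • u + (1 - ρ) • v)
        > ρ * nigInnerLoss y u + (1 - ρ) * nigInnerLoss y v := by
  have hu : ((y, 1, 2, 1/4) : ℝ × ℝ × ℝ × ℝ) ∈ nigDomain := by
    constructor <;> norm_num
  have hv : ((y + 4, 1, 2, 1/4) : ℝ × ℝ × ℝ × ℝ) ∈ nigDomain := by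
    constructor <;> norm_num
  have hmid : ((1:ℝ)/2) • ((y, 1, 2, 1/4) : ℝ × ℝ × ℝ × ℝ)
      + ((1:ℝ) - 1/2) • ((y + 4, 1, 2, 1/4) : ℝ × ℝ × ℝ × ℝ) = (y + 2, 1, 2, 1/4) := by
    simp only [Prod.smul_mk, smul_eq_mul, Prod.mk_add_mk, Prod.mk.injEq]
    refine ⟨by ring, by norm_num, by norm_num, by norm_num⟩
  have hkey : nigInnerLoss y ((1/2 : ℝ) • (y, 1, 2, 1/4) + ((1:ℝ) - 1/2) • (y + 4, 1, 2, 1/4))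
      > (1/2) * nigInnerLoss y (y, 1, 2, 1/4) + ((1:ℝ) - 1/2) * nigInnerLoss y (y + 4, 1, 2, 1/4) := by
    rw [hmid, nig_key, nig_key, nig_key]
    have h1 : y - y = 0 := by ring
    have h2 : y - (y + 2) = -2 := by ring
    have h3 : y - (y + 4) = -4 := by ring
    rw [h1, h2, h3]
    norm_num
    have hlog : Real.log 17 < 2 * Real.log 5 := by
      have h25 : (2:ℝ) * Real.log 5 = Real.log 25 := by
        rw [show (25:ℝ) = 5^2 by norm_num, Real.log_pow]; push_cast; ring
      rw [h25]; exact Real.log_lt_log (by norm_num) (by norm_num)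
    nlinarith [hlog]
  refine ⟨?_, (y, 1, 2, 1/4), hu, (y + 4, 1, 2, 1/4), hv, 1/2, by norm_num, hkey⟩
  intro hc
  have := hc.2 hu hv (by norm_num : (0:ℝ) ≤ 1/2) (by norm_num : (0:ℝ) ≤ 1 - 1/2) (by norm_num)
  rw [smul_eq_mul, smul_eq_mul] at this
  linarith [hkey]
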